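/- arXiv:1702.01796 — 5 statements merged into one kernel-verified Lean document; each statement's English description precedes it below -/
import Mathlib

section
/- The storage value admits the closed form V(π, θ) = θ · Σ_{k=1}^{N-1} max(π_{k+1} − π_k, 0) whenever π ∈ ℝ^N has nonnegative entries. That is, the optimal arbitrage value of a capacity-θ lossless storage equals θ times the sum of all positive price increments. -/
open Finset MeasureTheory ProbabilityTheory

/-- Storage operation constraint set: cumulative discharge stays in [0, θ]. -/
def U (N : ℕ) (θ : ℝ) : Set (Fin N → ℝ) :=
  {s | ∀ k : Fin N,
    0 ≤ -(∑ i ∈ Finset.univ.filter (fun i => i ≤ k), s i) ∧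
    -(∑ i ∈ Finset.univ.filter (fun i => i ≤ k), s i) ≤ θ}

/-- Storage (arbitrage) value: V(π, θ) = max { πᵀ s : s ∈ U(θ) }. -/
noncomputable def V (N : ℕ) (π : Fin N → ℝ) (θ : ℝ) : ℝ :=
  sSup ((fun s => ∑ i, π i * s i) '' U N θ)

private def extFin (N : ℕ) (s : Fin N → ℝ) (i : ℕ) : ℝ :=
  if h : i < N then s ⟨i, h⟩ else 0

private lemma extFin_pos (N : ℕ) (s : Fin N → ℝ) (i : ℕ) (h : i < N) :
    extFin N s i = s ⟨i, h⟩ := dif_pos h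

private lemma extFin_neg (N : ℕ) (s : Fin N → ℝ) (i : ℕ) (h : ¬ i < N) :
    extFin N s i = 0 := dif_neg h

private lemma abel_aux (f g : ℕ → ℝ) (n : ℕ) :
    ∑ k ∈ Finset.range n, f k * (g k - g (k + 1)) =
      ∑ k ∈ Finset.range n, (f (k + 1) - f k) * g (k + 1) + f 0 * g 0 - f n * g n := by
  induction n with
  | zero => simp
  | succ n ih =>
      rw [Finset.sum_range_succ, Finset.sum_range_succ (fun k => (f (k+1) - f k) * g (k+1)), ih]
      ring

private lemma prefix_eq (N : ℕ) (s : Fin N → ℝ) (k : Fin N) :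
    ∑ i ∈ Finset.univ.filter (fun i => i ≤ k), s i
      = ∑ i ∈ Finset.range (k.val + 1), extFin N s i := by
  rw [Finset.sum_filter]
  have h1 : ∀ i : Fin N, (if i ≤ k then s i else 0)
      = (fun j : ℕ => if j ≤ k.val then extFin N s j else 0) i.val := by
    intro i
    dsimp only
    by_cases h : i ≤ k
    · rw [if_pos h, if_pos (Fin.le_def.mp h)]
      simp [extFin_pos N s i.val i.isLt]
    · rw [if_neg h, if_neg (fun hle => h (Fin.le_def.mpr hle))]
  rw [Finset.sum_congr rfl (fun i _ => h1 i),
    Fin.sum_univ_eq_sum_range (fun j : ℕ => if j ≤ k.val then extFin N s j else 0) N]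
  rw [← Finset.sum_subset (Finset.range_subset_range.mpr k.isLt)
    (fun i _ hni => if_neg (fun hle => hni (Finset.mem_range.mpr (Nat.lt_succ_of_le hle))))]
  exact Finset.sum_congr rfl fun i hi =>
    if_pos (Nat.lt_succ_iff.mp (Finset.mem_range.mp hi))

private lemma value_eq (N : ℕ) (π s : Fin N → ℝ) :
    ∑ i, π i * s i
      = ∑ k ∈ Finset.range N,
          (extFin N π (k + 1) - extFin N π k) *
            (-(∑ i ∈ Finset.range (k + 1), extFin N s i)) := by
  have h1 : ∑ i, π i * s i = ∑ k ∈ Finset.range N, extFin N π k * extFin N s k := by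
    rw [← Fin.sum_univ_eq_sum_range (fun k => extFin N π k * extFin N s k) N]
    exact Finset.sum_congr rfl fun i _ => by
      simp [extFin_pos N π i.val i.isLt, extFin_pos N s i.val i.isLt]
  have h2 : ∀ k : ℕ, extFin N s k
      = (fun m => -(∑ i ∈ Finset.range m, extFin N s i)) k
        - (fun m => -(∑ i ∈ Finset.range m, extFin N s i)) (k + 1) := by
    intro k
    simp only [Finset.sum_range_succ]
    ring
  rw [h1, Finset.sum_congr rfl (fun k _ => by rw [h2 k]),
    abel_aux (extFin N π) (fun m => -(∑ i ∈ Finset.range m, extFin N s i)) N,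
    extFin_neg N π N (lt_irrefl N)]
  simp

theorem stmt4 (N : ℕ) (π : Fin N → ℝ) (hπ : ∀ k, 0 ≤ π k) (θ : ℝ) (hθ : 0 ≤ θ) :
    V N π θ =
      θ * ∑ k : Fin N,
        if h : (k : ℕ) + 1 < N then max (π ⟨(k : ℕ) + 1, h⟩ - π k) 0 else 0 := by
  classical
  set A : ℕ → ℝ := fun k => extFin N π (k + 1) - extFin N π k with hA
  set M : ℝ := ∑ k ∈ Finset.range N, max (A k) 0 with hM
  have hπ'nonneg : ∀ k, 0 ≤ extFin N π k := by
    intro k; unfold extFin; split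
    · exact hπ _
    · exact le_refl 0
  -- RHS equals θ * M
  have hRHS : (∑ k : Fin N,
      if h : (k : ℕ) + 1 < N then max (π ⟨(k : ℕ) + 1, h⟩ - π k) 0 else 0) = M := by
    have h1 : ∀ k : Fin N,
        (if h : (k : ℕ) + 1 < N then max (π ⟨(k : ℕ) + 1, h⟩ - π k) 0 else 0)
          = (fun j : ℕ => if h : j + 1 < N then max (A j) 0 else 0) k.val := by
      intro k
      dsimp only
      by_cases h : (k : ℕ) + 1 < N
      · rw [dif_pos h, dif_pos h]
        simp [hA, extFin_pos N π (k.val + 1) h, extFin_pos N π k.val k.isLt]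
      · rw [dif_neg h, dif_neg h]
    rw [Finset.sum_congr rfl (fun k _ => h1 k),
      Fin.sum_univ_eq_sum_range (fun j : ℕ => if h : j + 1 < N then max (A j) 0 else 0) N, hM]
    refine Finset.sum_congr rfl fun k hk => ?_
    by_cases h : k + 1 < N
    · rw [dif_pos h]
    · rw [dif_neg h]
      have hA0 : A k ≤ 0 := by
        show extFin N π (k + 1) - extFin N π k ≤ 0
        rw [extFin_neg N π (k + 1) h]
        have := hπ'nonneg k
        linarith
      exact (max_eq_right hA0).symm
  -- upper bound
  have hub : ∀ x ∈ (fun s => ∑ i, π i * s i) '' U N θ, x ≤ θ * M := by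
    rintro x ⟨s, hs, rfl⟩
    dsimp only
    rw [value_eq N π s, hM, Finset.mul_sum]
    refine Finset.sum_le_sum fun k hk => ?_
    have hkN : k < N := Finset.mem_range.mp hk
    have hAk : extFin N π (k + 1) - extFin N π k = A k := rfl
    rw [hAk]
    have hcon := hs ⟨k, hkN⟩
    rw [prefix_eq N s ⟨k, hkN⟩] at hcon
    set g : ℝ := -(∑ i ∈ Finset.range (k + 1), extFin N s i) with hg
    have h0g : 0 ≤ g := hcon.1
    have hgθ : g ≤ θ := hcon.2
    nlinarith [le_max_left (A k) 0, le_max_right (A k) 0]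
  -- maximizer
  set D : ℕ → ℝ := fun m => if 0 < extFin N π m - extFin N π (m - 1) then θ else 0 with hD
  have hD0 : D 0 = 0 := by simp [hD]
  have hDmem : ∀ m, 0 ≤ D m ∧ D m ≤ θ := by
    intro m; rw [hD]; dsimp only; split
    · exact ⟨hθ, le_refl θ⟩
    · exact ⟨le_refl 0, hθ⟩
  set sstar : Fin N → ℝ := fun i => D i.val - D (i.val + 1) with hsstar
  have hpre : ∀ m, m ≤ N → ∑ i ∈ Finset.range m, extFin N sstar i = -D m := by
    intro m hm
    have : ∀ i ∈ Finset.range m, extFin N sstar i = D i - D (i + 1) := by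
      intro i hi
      have hiN : i < N := lt_of_lt_of_le (Finset.mem_range.mp hi) hm
      rw [extFin_pos N sstar i hiN, hsstar]
    rw [Finset.sum_congr rfl this, Finset.sum_range_sub' D m, hD0]
    ring
  have hmem : sstar ∈ U N θ := by
    simp only [U, Set.mem_setOf_eq]
    intro k
    rw [prefix_eq N sstar k, hpre (k.val + 1) k.isLt, neg_neg]
    exact hDmem (k.val + 1)
  have hval : ∑ i, π i * sstar i = θ * M := by
    rw [value_eq N π sstar, hM, Finset.mul_sum]
    refine Finset.sum_congr rfl fun k hk => ?_
    have hkN : k < N := Finset.mem_range.mp hk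
    have hAk : extFin N π (k + 1) - extFin N π k = A k := rfl
    rw [hpre (k + 1) hkN, neg_neg, hAk]
    have hDk : D (k + 1) = if 0 < A k then θ else 0 := by
      rw [hD, hA]; simp
    rw [hDk]
    by_cases h : 0 < A k
    · rw [if_pos h, max_eq_left (le_of_lt h)]; ring
    · rw [if_neg h, max_eq_right (le_of_not_gt h)]; ring
  -- conclude
  have hmemval : θ * M ∈ (fun s => ∑ i, π i * s i) '' U N θ := ⟨sstar, hmem, hval⟩
  rw [hRHS, V]
  exact le_antisymm (csSup_le ⟨θ * M, hmemval⟩ hub) (le_csSup ⟨θ * M, hub⟩ hmemval)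
end

section
/- Retailer-side separation: suppose the retailer has renewable supply r° (a random vector in ℝ^N) and storage capacity θ° ≥ 0 operated ex-ante, with expected surplus rs(T) = max_{s ∈ U(θ°)} E[ Σᵢ T(qⁱ) − λᵀ(q_total − r° − s) ]. Then rs(T) = rs₀(T) + E[λᵀ r°] + V(λ̄, θ°), where rs₀(T) = E[Σᵢ T(qⁱ) − λᵀ q_total] is the surplus without DERs and λ̄ = E[λ]. In particular, the DER contribution E[λᵀ r°] + V(λ̄, θ°) is a constant independent of the tariff T. -/
open Finset MeasureTheory ProbabilityTheory

lemma U_abs_le {N : ℕ} {θ : ℝ} {s : Fin N → ℝ} (hs : s ∈ U N θ) (i : Fin N) :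
    |s i| ≤ θ := by
  have hcum : ∀ k : Fin N, -θ ≤ (∑ j ∈ Finset.univ.filter (fun j => j ≤ k), s j) ∧
      (∑ j ∈ Finset.univ.filter (fun j => j ≤ k), s j) ≤ 0 := by
    intro k
    obtain ⟨h1, h2⟩ := hs k
    constructor <;> linarith
  have hprev : -θ ≤ (∑ j ∈ Finset.univ.filter (fun j => j < i), s j) ∧
      (∑ j ∈ Finset.univ.filter (fun j => j < i), s j) ≤ 0 := by
    rcases Nat.eq_zero_or_pos i.val with h0 | hpos
    · have : Finset.univ.filter (fun j : Fin N => j < i) = ∅ := by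
        ext j; simp [Fin.lt_def, h0]
      have hθ : 0 ≤ θ := le_trans (hs i).1 (hs i).2
      rw [this, Finset.sum_empty]
      constructor <;> linarith
    · have hi' : i.val - 1 < N := by omega
      set i' : Fin N := ⟨i.val - 1, hi'⟩
      have : Finset.univ.filter (fun j : Fin N => j < i)
          = Finset.univ.filter (fun j : Fin N => j ≤ i') := by
        ext j
        simp only [Finset.mem_filter, Finset.mem_univ, true_and, Fin.lt_def, Fin.le_def]
        have hd : (i' : ℕ) = i.val - 1 := rfl
        omega
      rw [this]; exact hcum i'
  have hsplit : Finset.univ.filter (fun j : Fin N => j ≤ i)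
      = insert i (Finset.univ.filter (fun j : Fin N => j < i)) := by
    ext j
    simp only [Finset.mem_filter, Finset.mem_univ, true_and, Finset.mem_insert]
    constructor
    · intro h; rcases lt_or_eq_of_le h with h | h
      · exact Or.inr h
      · exact Or.inl h
    · rintro (rfl | h); · exact le_refl _
      · exact le_of_lt h
  have hi_not : i ∉ Finset.univ.filter (fun j : Fin N => j < i) := by simp
  have hsum := (hcum i)
  rw [hsplit, Finset.sum_insert hi_not] at hsum
  rw [abs_le]
  constructor <;> [nlinarith [hprev.1, hprev.2, hsum.1, hsum.2];
    nlinarith [hprev.1, hprev.2, hsum.1, hsum.2]]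

theorem stmt12 {Ω : Type*} [MeasurableSpace Ω] (μ : Measure Ω) [IsProbabilityMeasure μ]
    (N : ℕ) (Rev : Ω → ℝ)  -- total tariff revenue Σᵢ T(qⁱ) as a function of the state
    (lam r0 qtot : Ω → Fin N → ℝ) (θ0 : ℝ) (hθ0 : 0 ≤ θ0)
    (hRev : Integrable Rev μ)
    (hlq : Integrable (fun ω => ∑ t, lam ω t * qtot ω t) μ)
    (hlr : Integrable (fun ω => ∑ t, lam ω t * r0 ω t) μ)
    (hl : ∀ t, Integrable (fun ω => lam ω t) μ) :
    sSup {x | ∃ s ∈ U N θ0,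
        x = ∫ ω, (Rev ω - ∑ t, lam ω t * (qtot ω t - r0 ω t - s t)) ∂μ}
      = (∫ ω, (Rev ω - ∑ t, lam ω t * qtot ω t) ∂μ)
        + (∫ ω, ∑ t, lam ω t * r0 ω t ∂μ)
        + V N (fun t => ∫ ω, lam ω t ∂μ) θ0 := by
  set π : Fin N → ℝ := fun t => ∫ ω, lam ω t ∂μ with hπ
  set A : ℝ := ∫ ω, (Rev ω - ∑ t, lam ω t * qtot ω t) ∂μ with hA
  set B : ℝ := ∫ ω, ∑ t, lam ω t * r0 ω t ∂μ with hB
  have key : ∀ s ∈ U N θ0,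
      (∫ ω, (Rev ω - ∑ t, lam ω t * (qtot ω t - r0 ω t - s t)) ∂μ)
        = A + B + ∑ t, π t * s t := by
    intro s hs
    have hfs : Integrable (fun ω => ∑ t, lam ω t * s t) μ :=
      integrable_finset_sum _ (fun t _ => (hl t).mul_const (s t))
    have hpt : ∀ ω, Rev ω - ∑ t, lam ω t * (qtot ω t - r0 ω t - s t)
        = ((Rev ω - ∑ t, lam ω t * qtot ω t) + (∑ t, lam ω t * r0 ω t))
          + (∑ t, lam ω t * s t) := by
      intro ω
      simp only [mul_sub, Finset.sum_sub_distrib]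
      ring
    calc (∫ ω, (Rev ω - ∑ t, lam ω t * (qtot ω t - r0 ω t - s t)) ∂μ)
        = ∫ ω, (((Rev ω - ∑ t, lam ω t * qtot ω t) + (∑ t, lam ω t * r0 ω t))
            + (∑ t, lam ω t * s t)) ∂μ := by
          exact integral_congr_ae (Filter.Eventually.of_forall hpt)
      _ = A + B + ∑ t, π t * s t := by
          have h1 : Integrable (fun ω => Rev ω - ∑ t, lam ω t * qtot ω t) μ :=
            hRev.sub hlq
          have h12 : Integrable
              (fun ω => (Rev ω - ∑ t, lam ω t * qtot ω t) + ∑ t, lam ω t * r0 ω t) μ :=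
            h1.add hlr
          rw [integral_add h12 hfs, integral_add h1 hlr]
          congr 1
          rw [integral_finset_sum _ (fun t _ => (hl t).mul_const (s t))]
          exact Finset.sum_congr rfl fun t _ => integral_mul_const _ _
  set S : Set ℝ := (fun s : Fin N → ℝ => ∑ t, π t * s t) '' U N θ0 with hS
  have hne : S.Nonempty := by
    refine ⟨0, (0 : Fin N → ℝ), ?_, by simp⟩
    intro k; simp [hθ0]
  have hbdd : BddAbove S := by
    refine ⟨(∑ t, |π t|) * θ0, ?_⟩
    rintro y ⟨s, hs, rfl⟩
    calc (∑ t, π t * s t) ≤ ∑ t, |π t * s t| :=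
          Finset.sum_le_sum fun t _ => le_abs_self _
      _ ≤ ∑ t : Fin N, |π t| * θ0 := by
          refine Finset.sum_le_sum fun t _ => ?_
          rw [abs_mul]
          exact mul_le_mul_of_nonneg_left (U_abs_le hs t) (abs_nonneg _)
      _ = (∑ t, |π t|) * θ0 := by rw [← Finset.sum_mul]
  have hset : {x | ∃ s ∈ U N θ0,
      x = ∫ ω, (Rev ω - ∑ t, lam ω t * (qtot ω t - r0 ω t - s t)) ∂μ}
      = (fun y => A + B + y) '' S := by
    ext x
    simp only [Set.mem_setOf_eq, hS, Set.mem_image]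
    constructor
    · rintro ⟨s, hs, rfl⟩
      exact ⟨∑ t, π t * s t, ⟨s, hs, rfl⟩, (key s hs).symm⟩
    · rintro ⟨y, ⟨s, hs, rfl⟩, rfl⟩
      exact ⟨s, hs, (key s hs).symm⟩
  rw [hset]
  have h := (OrderIso.addLeft (A + B)).map_csSup' hne hbdd
  simp only [OrderIso.addLeft_apply] at h
  rw [show V N π θ0 = sSup S from rfl, ← h]
end

section
/- Equivalence of the centralized-DER regulator problem to a DER-free problem with shifted fixed cost: with rs(T) = rs₀(T) + c for a constant c = E[λᵀ r°] + V(λ̄, θ°) independent of T, the problem max_T { cs(T) : rs(T) = F } has the same feasible set and same optimal solutions as max_T { cs(T) : rs₀(T) = F − c }. Consequently, if T* with price π* and connection charge A*(G) = (1/M)(G − E[(π*−λ)ᵀ D]) solves the DER-free problem for every fixed-cost target G, then the centralized-DER problem with target F is solved by the same price π* and connection charge A*(F) − c/M. -/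
open Finset MeasureTheory ProbabilityTheory

theorem stmt13 (N M : ℕ) (hM : 1 ≤ M)
    (cs rs0 : ℝ → (Fin N → ℝ) → ℝ)  -- consumer surplus and DER-free retailer surplus of (A, π)
    (c F e : ℝ)  -- c = E[λᵀr°] + V(λ̄, θ°); e = E[(π* − λ)ᵀ D]
    (πstar : Fin N → ℝ) (Astar : ℝ → ℝ)
    (hA : ∀ G, Astar G = (1 / M) * (G - e))
    (hopt : ∀ G, rs0 (Astar G) πstar = G ∧
      ∀ A π, rs0 A π = G → cs A π ≤ cs (Astar G) πstar) :
    -- same feasible set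
    ({p : ℝ × (Fin N → ℝ) | rs0 p.1 p.2 + c = F} = {p | rs0 p.1 p.2 = F - c}) ∧
    -- (π*, A*(F − c)) is revenue adequate and optimal for the centralized-DER problem
    (rs0 (Astar (F - c)) πstar + c = F) ∧
    (∀ A π, rs0 A π + c = F → cs A π ≤ cs (Astar (F - c)) πstar) ∧
    -- the connection charge is reduced by exactly c / M
    (Astar (F - c) = Astar F - c / M) := by
  refine ⟨?_, ?_, ?_, ?_⟩
  · ext p; simp [Set.mem_setOf_eq]; constructor <;> intro h <;> linarith
  · have := (hopt (F - c)).1; linarith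
  · intro A π h
    exact (hopt (F - c)).2 A π (by linarith)
  · rw [hA, hA]; ring
end

section
/- Welfare additivity of decentralized DERs at the optimal tariff: under the two-part tariff with price π = λ̄ and revenue-adequate connection charge, the expected social surplus with customer-integrated DERs equals W₀* + Σᵢ ( V(λ̄, θⁱ) + E[λᵀ rⁱ(ωⁱ)] ), where W₀* = Σᵢ E[ S^i(Dⁱ(λ̄, ωⁱ), ωⁱ) − λᵀ Dⁱ(λ̄, ωⁱ) ] is the no-DER optimal social surplus. In particular, the DER-induced welfare gain Σᵢ ( V(λ̄, θⁱ) + E[λᵀ rⁱ] ) does not depend on the fixed-cost target F. -/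
open Finset MeasureTheory ProbabilityTheory

theorem stmt16 {Ω : Type*} [MeasurableSpace Ω] (μ : Measure Ω) [IsProbabilityMeasure μ]
    (N M : ℕ)
    (S : Fin M → (Fin N → ℝ) → Ω → ℝ)
    (D r : Fin M → Ω → Fin N → ℝ)  -- D i = Dⁱ(λ̄, ωⁱ): demand at price π = λ̄
    (lam : Ω → Fin N → ℝ) (θ : Fin M → ℝ) (hθ : ∀ i, 0 ≤ θ i)
    (sstar : Fin M → Fin N → ℝ)
    (hmem : ∀ i, sstar i ∈ U N (θ i))
    (hopt : ∀ i, ∀ s ∈ U N (θ i),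
      ∑ t, (∫ ω, lam ω t ∂μ) * s t ≤ ∑ t, (∫ ω, lam ω t ∂μ) * sstar i t)
    (hl : ∀ t, Integrable (fun ω => lam ω t) μ)
    (hS : Integrable (fun ω => ∑ i, S i (D i ω) ω) μ)
    (hlD : ∀ i, Integrable (fun ω => ∑ t, lam ω t * D i ω t) μ)
    (hlr : ∀ i, Integrable (fun ω => ∑ t, lam ω t * r i ω t) μ) :
    -- social surplus with behind-the-meter DERs = no-DER surplus + Σᵢ (V(λ̄,θⁱ) + E[λᵀrⁱ])
    ∫ ω, ∑ i, (S i (D i ω) ω - ∑ t, lam ω t * (D i ω t - r i ω t - sstar i t)) ∂μ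
      = (∫ ω, ∑ i, (S i (D i ω) ω - ∑ t, lam ω t * D i ω t) ∂μ)
        + ∑ i, (V N (fun t => ∫ ω, lam ω t ∂μ) (θ i)
            + ∫ ω, ∑ t, lam ω t * r i ω t ∂μ) := by
  have hV : ∀ i, V N (fun t => ∫ ω, lam ω t ∂μ) (θ i)
      = ∑ t, (∫ ω, lam ω t ∂μ) * sstar i t := by
    intro i
    apply IsGreatest.csSup_eq
    constructor
    · exact ⟨sstar i, hmem i, rfl⟩
    · rintro x ⟨s, hs, rfl⟩
      exact hopt i s hs
  have hCint : ∀ i, Integrable (fun ω => ∑ t, lam ω t * sstar i t) μ := fun i =>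
    integrable_finset_sum _ (fun t _ => (hl t).mul_const _)
  have hA : Integrable (fun ω => ∑ i, (S i (D i ω) ω - ∑ t, lam ω t * D i ω t)) μ := by
    have := hS.sub (integrable_finset_sum (μ := μ) Finset.univ (fun i _ => hlD i))
    simpa [Finset.sum_sub_distrib, Pi.sub_def] using this
  have hB : Integrable (fun ω => ∑ i, ∑ t, lam ω t * r i ω t) μ :=
    integrable_finset_sum _ (fun i _ => hlr i)
  have hC : Integrable (fun ω => ∑ i, ∑ t, lam ω t * sstar i t) μ :=
    integrable_finset_sum _ (fun i _ => hCint i)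
  have key : (fun ω => ∑ i, (S i (D i ω) ω - ∑ t, lam ω t * (D i ω t - r i ω t - sstar i t)))
      = fun ω => (∑ i, (S i (D i ω) ω - ∑ t, lam ω t * D i ω t))
        + ((∑ i, ∑ t, lam ω t * r i ω t) + (∑ i, ∑ t, lam ω t * sstar i t)) := by
    funext ω
    rw [← Finset.sum_add_distrib, ← Finset.sum_add_distrib]
    apply Finset.sum_congr rfl
    intro i _
    simp only [mul_sub, Finset.sum_sub_distrib, Finset.sum_add_distrib]
    ring
  have hBC : Integrable (fun ω => (∑ i, ∑ t, lam ω t * r i ω t)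
      + ∑ i, ∑ t, lam ω t * sstar i t) μ := hB.add hC
  rw [key, integral_add hA hBC, integral_add hB hC,
    integral_finset_sum _ (fun i _ => hlr i), integral_finset_sum _ (fun i _ => hCint i)]
  have hCi : ∀ i, (∫ ω, ∑ t, lam ω t * sstar i t ∂μ) = ∑ t, (∫ ω, lam ω t ∂μ) * sstar i t := by
    intro i
    rw [integral_finset_sum _ (fun t _ => (hl t).mul_const _)]
    exact Finset.sum_congr rfl fun t _ => integral_mul_const _ _
  simp only [hV, hCi]
  ring_nf
  rw [Finset.sum_add_distrib]
  ring
end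

section
/- Equal welfare of decentralized and centralized DER integration: if the renewable profiles and storage capacities satisfy Σᵢ E[λᵀ rⁱ(ωⁱ)] = E[λᵀ r°(ξ)] and Σᵢ V(λ̄, θⁱ) = V(λ̄, θ°), then the optimal expected social surplus under the decentralized model, W₀* + Σᵢ(V(λ̄, θⁱ) + E[λᵀ rⁱ]), equals the optimal expected social surplus under the centralized model, W₀* + V(λ̄, θ°) + E[λᵀ r°]. In particular, with identical aggregate resources (r° = Σᵢ rⁱ pointwise and θ° = Σᵢ θⁱ, using additivity V(λ̄, Σᵢθⁱ) = Σᵢ V(λ̄, θⁱ)), both integration models achieve the same social welfare under their respective optimal two-part tariffs. -/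
open Finset MeasureTheory ProbabilityTheory Pointwise

lemma filter_le_eq_Iic (N : ℕ) (k : Fin N) :
    Finset.univ.filter (fun i => i ≤ k) = Finset.Iic k := by
  ext i; simp

lemma zero_mem_U (N : ℕ) (θ : ℝ) (hθ : 0 ≤ θ) : (0 : Fin N → ℝ) ∈ U N θ := by
  intro k
  simp [hθ]

lemma U_zero (N : ℕ) : U N 0 = {0} := by
  ext s
  constructor
  · intro hs
    have hS : ∀ k : Fin N, ∑ i ∈ Finset.Iic k, s i = 0 := by
      intro k
      have h1 := (hs k).1
      have h2 := (hs k).2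
      rw [filter_le_eq_Iic] at h1 h2
      linarith
    have key : ∀ n : ℕ, ∀ j : Fin N, (j : ℕ) = n → s j = 0 := by
      intro n
      induction n using Nat.strong_induction_on with
      | _ n ih =>
        intro j hj
        have h1 : ∑ i ∈ Finset.Iic j, s i = 0 := hS j
        have h2 : Finset.Iic j = insert j (Finset.Iio j) := (Finset.Iio_insert j).symm
        rw [h2, Finset.sum_insert (by simp)] at h1
        have h3 : ∑ i ∈ Finset.Iio j, s i = 0 := by
          apply Finset.sum_eq_zero
          intro i hi
          have hilt : (i : ℕ) < (j : ℕ) := Fin.lt_def.mp (Finset.mem_Iio.mp hi)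
          exact ih (i : ℕ) (hj ▸ hilt) i rfl
        rw [h3] at h1; linarith
    funext j; exact key (j : ℕ) j rfl
  · rintro rfl
    exact zero_mem_U N 0 le_rfl

lemma U_smul (N : ℕ) (θ : ℝ) (hθ : 0 < θ) : U N θ = θ • U N 1 := by
  ext s
  constructor
  · intro hs
    refine ⟨θ⁻¹ • s, ?_, by show θ • θ⁻¹ • s = s; rw [smul_smul, mul_inv_cancel₀ hθ.ne', one_smul]⟩
    intro k
    obtain ⟨h1, h2⟩ := hs k
    have hsum : ∑ i ∈ Finset.univ.filter (fun i => i ≤ k), (θ⁻¹ • s) i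
        = θ⁻¹ * ∑ i ∈ Finset.univ.filter (fun i => i ≤ k), s i := by
      rw [Finset.mul_sum]; rfl
    have hinv : 0 ≤ θ⁻¹ := (inv_pos.mpr hθ).le
    have hcancel : θ⁻¹ * θ = 1 := inv_mul_cancel₀ hθ.ne'
    constructor
    · rw [hsum]
      nlinarith
    · rw [hsum]
      nlinarith
  · rintro ⟨t, ht, rfl⟩
    intro k
    obtain ⟨h1, h2⟩ := ht k
    have hsum : ∑ i ∈ Finset.univ.filter (fun i => i ≤ k), (θ • t) i
        = θ * ∑ i ∈ Finset.univ.filter (fun i => i ≤ k), t i := by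
      rw [Finset.mul_sum]; rfl
    constructor
    · rw [hsum]
      nlinarith
    · rw [hsum]
      nlinarith

lemma V_homog (N : ℕ) (π : Fin N → ℝ) (θ : ℝ) (hθ : 0 ≤ θ) :
    V N π θ = θ * V N π 1 := by
  rcases eq_or_lt_of_le hθ with h | h
  · subst h
    have h1 : V N π 0 = 0 := by
      unfold V
      rw [U_zero]
      simp
    rw [← h1]; ring_nf
    simp [h1]
  · unfold V
    rw [U_smul N θ h]
    have hobj : ∀ t : Fin N → ℝ, (∑ i, π i * (θ • t) i) = θ * ∑ i, π i * t i := by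
      intro t
      rw [Finset.mul_sum]
      refine Finset.sum_congr rfl fun i _ => ?_
      show π i * (θ * t i) = θ * (π i * t i)
      ring
    have himg : (fun s => ∑ i, π i * s i) '' (θ • U N 1)
        = θ • ((fun s => ∑ i, π i * s i) '' U N 1) := by
      ext x
      constructor
      · rintro ⟨s, ⟨t, ht, rfl⟩, rfl⟩
        exact ⟨∑ i, π i * t i, ⟨t, ht, rfl⟩, by show θ • (∑ i, π i * t i) = ∑ i, π i * (θ • t) i; rw [smul_eq_mul, ← hobj]⟩
      · rintro ⟨y, ⟨t, ht, rfl⟩, rfl⟩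
        exact ⟨θ • t, ⟨t, ht, rfl⟩, by show (∑ i, π i * (θ • t) i) = θ • (∑ i, π i * t i); rw [smul_eq_mul, hobj]⟩
    rw [himg, Real.sSup_smul_of_nonneg hθ]
    rfl

theorem stmt17 (N M : ℕ) (W0 : ℝ)  -- W₀*: the no-DER optimal social surplus
    (lbar : Fin N → ℝ)  -- λ̄ = E[λ]
    (θ : Fin M → ℝ) (hθ : ∀ i, 0 ≤ θ i) (θ0 : ℝ)
    (a : Fin M → ℝ) (a0 : ℝ)  -- a i = E[λᵀ rⁱ(ωⁱ)], a0 = E[λᵀ r°(ξ)]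
    (ha : ∑ i, a i = a0) :
    -- under equal aggregate storage value, decentralized and centralized welfare coincide
    ((∑ i, V N lbar (θ i) = V N lbar θ0) →
      W0 + ∑ i, (V N lbar (θ i) + a i) = W0 + V N lbar θ0 + a0) ∧
    -- with identical aggregate capacity, storage value is additive
    (θ0 = ∑ i, θ i → V N lbar θ0 = ∑ i, V N lbar (θ i)) := by
  constructor
  · intro h
    rw [Finset.sum_add_distrib, h, ha]
    ring
  · intro h
    subst h
    rw [V_homog N lbar _ (Finset.sum_nonneg fun i _ => hθ i), Finset.sum_mul]
    exact Finset.sum_congr rfl fun i _ => (V_homog N lbar (θ i) (hθ i)).symm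
end
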